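/- Let ν₁, ν₂, ν₃ > 0 with ν₁ + ν₂ + ν₃ = 1, and let p₁ = (0,0,1), p₂ = (0, w₂, z₂), p₃ = (0, w₃, z₃) be three distinct points of the unit sphere (so w₂² + z₂² = w₃² + z₃² = 1). Assume ν₁p₁ + ν₂p₂ + ν₃p₃ = 0, and that ν₂w₂² + ν₃w₃² = 1/2, ν₁ + ν₂z₂² + ν₃z₃² = 1/2, and ν₂w₂z₂ + ν₃w₃z₃ = 0. Then ν₁ = ν₂ = ν₃ = 1/3, z₂ = z₃ = −1/2, and {w₂, w₃} = {√3/2, −√3/2}; that is, p₁, p₂, p₃ are the vertices of an equilateral triangle inscribed in the unit circle of the plane {x₁ = 0}. -/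

import Mathlib

open MeasureTheory Real Filter Topology

noncomputable section

abbrev E3 : Type := EuclideanSpace ℝ (Fin 3)

abbrev S2 : Set E3 := Metric.sphere (0 : E3) 1

/-- The standard surface measure on the unit sphere `S²` (total mass `4π`). -/
noncomputable def μS : Measure S2 := MeasureTheory.volume.toSphere

/-- The degree-zero homogeneous extension of a function on the sphere. -/
noncomputable def homExt (u : S2 → ℝ) (x : E3) : ℝ :=
  letI := Classical.dec (x = 0)
  if hx : x = 0 then 0
  else u ⟨‖x‖⁻¹ • x, by
    have hx' : ‖x‖ ≠ 0 := norm_ne_zero_iff.mpr hx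
    simp only [Metric.mem_sphere, dist_zero_right, norm_smul, norm_inv, norm_norm]
    exact inv_mul_cancel₀ hx'⟩

/-- The squared norm of the tangential gradient, computed through the
degree-zero homogeneous extension. -/
noncomputable def gradSq (u : S2 → ℝ) (p : S2) : ℝ :=
  ‖gradient (homExt u) (p : E3)‖ ^ 2

/-- The Laplace–Beltrami operator on `S²`, computed through the degree-zero
homogeneous extension (for which the ambient Laplacian restricted to the sphere
agrees with the spherical Laplacian). -/
noncomputable def lapS2 (u : S2 → ℝ) (p : S2) : ℝ :=
  ∑ i : Fin 3, fderiv ℝ (fun y => fderiv ℝ (homExt u) y (EuclideanSpace.single i 1))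
    (p : E3) (EuclideanSpace.single i 1)

/-- Smoothness of a function on the sphere, via its homogeneous extension. -/
def SmoothS2 (u : S2 → ℝ) : Prop :=
  ContDiffOn ℝ (⊤ : ℕ∞) (homExt u) {(0 : E3)}ᶜ

/-- Membership in `H¹(S²)`. -/
def MemH1 (u : S2 → ℝ) : Prop :=
  DifferentiableOn ℝ (homExt u) {(0 : E3)}ᶜ ∧
    MeasureTheory.MemLp u 2 μS ∧
    MeasureTheory.MemLp (fun p : S2 => ‖gradient (homExt u) (p : E3)‖) 2 μS

/-- The matrix `Λ(u)` of deviations of second order moments. -/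
noncomputable def Lam (u : S2 → ℝ) : Matrix (Fin 3) (Fin 3) ℝ := fun i j =>
  (∫ p : S2, Real.exp (2 * u p) * ((p : E3) i * (p : E3) j - (if i = j then (1:ℝ)/3 else 0)) ∂μS)
    / ∫ p : S2, Real.exp (2 * u p) ∂μS

/-- Squared Frobenius norm of a `3 × 3` matrix. -/
noncomputable def frobSq (M : Matrix (Fin 3) (Fin 3) ℝ) : ℝ := ∑ i, ∑ j, (M i j) ^ 2

/-- The class `M̊₁`: `H¹` functions whose first order moments of `e^{2u}` vanish. -/
def MemM1 (u : S2 → ℝ) : Prop :=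
  MemH1 u ∧ ∀ i : Fin 3, ∫ p : S2, (p : E3) i * Real.exp (2 * u p) ∂μS = 0

/-- The mean field equation `-aΔu + 1 = e^{2u}` on `S²`. -/
def MFE (a : ℝ) (u : S2 → ℝ) : Prop :=
  ∀ p : S2, -a * lapS2 u p + 1 = Real.exp (2 * u p)

end

/-- Classification of the equality configuration: if `ν₁,ν₂,ν₃ > 0` sum
to `1`, `p₁ = (0,0,1)`, `p₂ = (0,w₂,z₂)`, `p₃ = (0,w₃,z₃)` are distinct points of the unit
sphere with `ν₁p₁ + ν₂p₂ + ν₃p₃ = 0`, `ν₂w₂² + ν₃w₃² = 1/2`, `ν₁ + ν₂z₂² + ν₃z₃² = 1/2`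
and `ν₂w₂z₂ + ν₃w₃z₃ = 0`, then `ν₁ = ν₂ = ν₃ = 1/3`, `z₂ = z₃ = −1/2` and
`{w₂, w₃} = {√3/2, −√3/2}`: the three points are the vertices of an equilateral triangle
inscribed in the unit circle of the plane `{x₁ = 0}`. -/
theorem equality_configuration (ν₁ ν₂ ν₃ w₂ z₂ w₃ z₃ : ℝ)
    (hν₁ : 0 < ν₁) (hν₂ : 0 < ν₂) (hν₃ : 0 < ν₃) (hsum : ν₁ + ν₂ + ν₃ = 1)
    (hp₂ : w₂ ^ 2 + z₂ ^ 2 = 1) (hp₃ : w₃ ^ 2 + z₃ ^ 2 = 1)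
    (hd12 : (w₂, z₂) ≠ ((0:ℝ), (1:ℝ))) (hd13 : (w₃, z₃) ≠ ((0:ℝ), (1:ℝ)))
    (hd23 : (w₂, z₂) ≠ (w₃, z₃))
    (hbary2 : ν₂ * w₂ + ν₃ * w₃ = 0)
    (hbary3 : ν₁ + ν₂ * z₂ + ν₃ * z₃ = 0)
    (h1 : ν₂ * w₂ ^ 2 + ν₃ * w₃ ^ 2 = 1/2)
    (h2 : ν₁ + ν₂ * z₂ ^ 2 + ν₃ * z₃ ^ 2 = 1/2)
    (h3 : ν₂ * w₂ * z₂ + ν₃ * w₃ * z₃ = 0) :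
    ν₁ = 1/3 ∧ ν₂ = 1/3 ∧ ν₃ = 1/3 ∧ z₂ = -(1/2) ∧ z₃ = -(1/2) ∧
      ({w₂, w₃} : Set ℝ) = {Real.sqrt 3 / 2, -(Real.sqrt 3 / 2)} := by
  have hd12' : ¬(w₂ = 0 ∧ z₂ = 1) := by simpa [Prod.ext_iff] using hd12
  have hd13' : ¬(w₃ = 0 ∧ z₃ = 1) := by simpa [Prod.ext_iff] using hd13
  have hd23' : ¬(w₂ = w₃ ∧ z₂ = z₃) := by simpa [Prod.ext_iff] using hd23
  have hw2 : w₂ ≠ 0 := by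
    intro hw
    have hz2 : z₂ = -1 := by
      have : (z₂ - 1) * (z₂ + 1) = 0 := by linear_combination hp₂ - w₂ * hw
      rcases mul_eq_zero.1 this with h | h
      · exact absurd ⟨hw, by linarith⟩ hd12'
      · linarith
    have hw3 : w₃ = 0 := by
      have h : ν₃ * w₃ = 0 := by rw [hw] at hbary2; linarith
      rcases mul_eq_zero.1 h with h | h
      · exact absurd h (ne_of_gt hν₃)
      · exact h
    have hz3 : z₃ = -1 := by
      have : (z₃ - 1) * (z₃ + 1) = 0 := by linear_combination hp₃ - w₃ * hw3
      rcases mul_eq_zero.1 this with h | h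
      · exact absurd ⟨hw3, by linarith⟩ hd13'
      · linarith
    exact hd23' ⟨by rw [hw, hw3], by rw [hz2, hz3]⟩
  -- z₂ = z₃
  have hzz : z₂ = z₃ := by
    have hkey : (ν₂ * w₂) * (z₂ - z₃) = 0 := by
      have h : ν₃ * w₃ = -(ν₂ * w₂) := by linarith
      linear_combination h3 - z₃ * h
    have hne : ν₂ * w₂ ≠ 0 := mul_ne_zero (ne_of_gt hν₂) hw2
    have := (mul_eq_zero.1 hkey).resolve_left hne
    linarith
  -- w₃ = -w₂
  have hww : w₃ = -w₂ := by
    have hsq : (w₃ - w₂) * (w₃ + w₂) = 0 := by linear_combination hp₃ - hp₂ + (z₂ + z₃) * hzz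
    rcases mul_eq_zero.1 hsq with h | h
    · exact absurd ⟨by linarith, hzz⟩ hd23'
    · linarith
  -- ν₂ = ν₃
  have hνν : ν₂ = ν₃ := by
    have h : (ν₂ - ν₃) * w₂ = 0 := by rw [hww] at hbary2; linarith
    have := (mul_eq_zero.1 h).resolve_right hw2
    linarith
  -- z₂ = -1/2
  have hν1eq : ν₁ = -(2 * ν₂ * z₂) := by
    have := hbary3; rw [← hzz, ← hνν] at this; linarith
  have h1' : 2 * ν₂ * w₂ ^ 2 = 1/2 := by
    have := h1; rw [hww, ← hνν] at this; linear_combination this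
  have h2' : ν₁ + 2 * ν₂ * z₂ ^ 2 = 1/2 := by
    have := h2; rw [← hzz, ← hνν] at this; linarith
  have hz : z₂ = -(1/2) := by
    have hq : ν₂ * ((2 * z₂ + 1) * (z₂ - 1)) = 0 := by
      linear_combination (1/2) * h2' - (1/2) * hν1eq - (1/2) * h1' + ν₂ * hp₂
    rcases mul_eq_zero.1 hq with h | h
    · exact absurd h (ne_of_gt hν₂)
    rcases mul_eq_zero.1 h with h | h
    · linarith
    · exfalso
      have hz1 : z₂ = 1 := by linarith
      have : w₂ ^ 2 = 0 := by linear_combination hp₂ - (z₂ + 1) * hz1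
      exact hw2 (pow_eq_zero_iff two_ne_zero |>.1 this)
  have hw2sq : w₂ ^ 2 = 3/4 := by linear_combination hp₂ - (z₂ - 1/2) * hz
  have hν2 : ν₂ = 1/3 := by linear_combination (2/3) * h1' - (4/3) * ν₂ * hw2sq
  have hν3 : ν₃ = 1/3 := by linarith
  have hν1 : ν₁ = 1/3 := by linarith
  have hz3 : z₃ = -(1/2) := by rw [← hzz]; exact hz
  refine ⟨hν1, hν2, hν3, hz, hz3, ?_⟩
  have hs : (Real.sqrt 3 / 2) ^ 2 = 3/4 := by
    rw [div_pow, Real.sq_sqrt (by norm_num : (0:ℝ) ≤ 3)]; norm_num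
  have hfac : (w₂ - Real.sqrt 3 / 2) * (w₂ + Real.sqrt 3 / 2) = 0 := by linear_combination hw2sq - hs
  rcases mul_eq_zero.1 hfac with h | h
  · have hw : w₂ = Real.sqrt 3 / 2 := by linarith
    rw [hw, hww, hw]
  · have hw : w₂ = -(Real.sqrt 3 / 2) := by linarith
    rw [hw, hww, hw, neg_neg, Set.pair_comm]
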